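/- For parameters (x, y, z, x₁, y₁) ∈ ℝ⁵ define p₇ := −x/6 − x₁/2 − y₁, p₈ := −x, p̂₅ := z, p̂₆ := z − 2y₁, r₂ := −x₁/2 − y₁, and say the parameters satisfy the hyperbolicity inequalities for dimension n if x ≠ 0, (n−4)·x ≠ 0, y ≠ 0, x₁ ≠ 0, y₁ ≠ 0, and x₁·(3z − x − 6y₁) ≠ 0. Then for every real n > 4: (i) there exist parameters satisfying all the hyperbolicity inequalities with p₇ = 0 and p̂₅ = 0 (for instance z = 0 and x₁ = −(x + 6y₁)/3 with x = y = y₁ = 1); (ii) no parameters satisfying all the hyperbolicity inequalities have p₇ = p₈ = 0; (iii) no parameters satisfying all the hyperbolicity inequalities have p̂₅ = p̂₆ = 0; in particular no parameters satisfying them have p₇ = p₈ = 0 and r₂ = 0. -/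
import Mathlib


/-- The coefficient `p₇ = −x/6 − x₁/2 − y₁`. -/
noncomputable def p7 (x x₁ y₁ : ℝ) : ℝ := -x/6 - x₁/2 - y₁

/-- The coefficient `p₈ = −x`. -/
def p8 (x : ℝ) : ℝ := -x

/-- The coefficient `p̂₅ = z`. -/
def pHat5 (z : ℝ) : ℝ := z

/-- The coefficient `p̂₆ = z − 2y₁`. -/
def pHat6 (z y₁ : ℝ) : ℝ := z - 2*y₁

/-- The coefficient `r₂ = −x₁/2 − y₁`. -/
noncomputable def r2 (x₁ y₁ : ℝ) : ℝ := -x₁/2 - y₁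

/-- The hyperbolicity inequalities for dimension `n` on the parameters
`(x, y, z, x₁, y₁)`. -/
def HypIneq (n x y z x₁ y₁ : ℝ) : Prop :=
  x ≠ 0 ∧ (n - 4)*x ≠ 0 ∧ y ≠ 0 ∧ x₁ ≠ 0 ∧ y₁ ≠ 0 ∧ x₁*(3*z - x - 6*y₁) ≠ 0

/-- For every real `n > 4`: (i) there are parameters satisfying the hyperbolicity
inequalities with `p₇ = 0` and `p̂₅ = 0` (so the principal symbol can be made block
diagonal); (ii) no parameters satisfying them have `p₇ = p₈ = 0` (lower block
triangular is impossible); (iii) no parameters satisfying them have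
`p̂₅ = p̂₆ = 0` (upper block triangular is impossible); in particular none have
`p₇ = p₈ = r₂ = 0` (the CYK equation cannot be decoupled from `dY = 0`). -/
theorem block_structure_of_propagation_identity (n : ℝ) (hn : n > 4) :
    (∃ x y z x₁ y₁ : ℝ, HypIneq n x y z x₁ y₁ ∧ p7 x x₁ y₁ = 0 ∧ pHat5 z = 0) ∧
    (∀ x y z x₁ y₁ : ℝ, HypIneq n x y z x₁ y₁ →
      ¬(p7 x x₁ y₁ = 0 ∧ p8 x = 0)) ∧
    (∀ x y z x₁ y₁ : ℝ, HypIneq n x y z x₁ y₁ →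
      ¬(pHat5 z = 0 ∧ pHat6 z y₁ = 0)) ∧
    (∀ x y z x₁ y₁ : ℝ, HypIneq n x y z x₁ y₁ →
      ¬(p7 x x₁ y₁ = 0 ∧ p8 x = 0 ∧ r2 x₁ y₁ = 0)) := by
  refine ⟨⟨1, 1, 0, -7/3, 1, ?_, ?_, ?_⟩, ?_, ?_, ?_⟩
  · refine ⟨by norm_num, by intro h0; norm_num at h0; linarith, by norm_num, by norm_num, by norm_num, by norm_num⟩
  · simp [p7]; ring
  · rfl
  · rintro x y z x₁ y₁ h ⟨_, h8⟩
    exact h.1 (by simpa [p8, neg_eq_zero] using h8)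
  · rintro x y z x₁ y₁ h ⟨h5, h6⟩
    apply h.2.2.2.2.1
    have : z = 0 := h5
    have := h6
    simp [pHat6, this] at this ⊢
    linarith
  · rintro x y z x₁ y₁ h ⟨_, h8, _⟩
    exact h.1 (by simpa [p8, neg_eq_zero] using h8)
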